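/- arXiv:1502.06264 — 4 statements merged into one kernel-verified Lean document; each statement's English description precedes it below -/
import Mathlib

section
/- Let (M_p) satisfy (M.1) (log-convexity: M_p^2 ≤ M_{p-1} M_{p+1} for p ≥ 1), with M_0 = M_1 = 1, and suppose the quotients m_p = M_p/M_{p-1} satisfy that m_p / p^λ is monotonically increasing for some λ > 0. Then (M_p) satisfies (M.5): there exist s > 0 and c_0 ≥ 1 with ∑_{q=p+1}^∞ m_q^{-s} ≤ c_0 p m_{p+1}^{-s} for all p ≥ 1. -/
/-!
Put `s = 2 / λ`. Monotonicity of `m_q / q^λ` gives `m_q ≥ m_{p+1} (q / (p+1))^λ` for `q > p`,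
hence `m_q^{-s} ≤ m_{p+1}^{-s} (p+1)² / q²`. Summing over `q > p` and using
`∑_{q > p} q⁻² ≤ 1/p` bounds the tail by `m_{p+1}^{-s} (p+1)²/p ≤ 4 p m_{p+1}^{-s}`.
-/

open Finset

lemma rpow_neg_div_le_of_div_rpow_le {a b x y lam κ : ℝ} (ha : 0 < a) (hx : 0 < x) (hy : 0 < y)
    (hlam : 0 < lam) (hκ : 0 ≤ κ) (h : a / x ^ lam ≤ b / y ^ lam) :
    b ^ (-(κ / lam)) ≤ a ^ (-(κ / lam)) * (x / y) ^ κ := by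
  have hyx : 0 < y / x := div_pos hy hx
  have hb : a * (y / x) ^ lam ≤ b := by
    rw [Real.div_rpow hy.le hx.le, ← mul_div_assoc, div_le_iff₀ (by positivity)]
    rwa [div_le_div_iff₀ (by positivity) (by positivity)] at h
  calc b ^ (-(κ / lam)) ≤ (a * (y / x) ^ lam) ^ (-(κ / lam)) :=
        Real.rpow_le_rpow_of_nonpos (by positivity) hb (by simp only [neg_nonpos]; positivity)
    _ = a ^ (-(κ / lam)) * (x / y) ^ κ := by
        rw [Real.mul_rpow ha.le (by positivity), ← Real.rpow_mul hyx.le,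
          show lam * -(κ / lam) = -κ by field_simp, Real.rpow_neg hyx.le, ← Real.inv_rpow hyx.le,
          inv_div]

lemma sum_range_inv_sq_add_le (p n : ℕ) (hp : p ≠ 0) :
    ∑ j ∈ range n, (((p + j + 1 : ℕ) : ℝ) ^ 2)⁻¹ ≤ (p : ℝ)⁻¹ := by
  have hIoc : ∑ i ∈ Ioc p (p + n), ((i : ℝ) ^ 2)⁻¹ = ∑ j ∈ range n, (((p + j + 1 : ℕ) : ℝ) ^ 2)⁻¹ := by
    rw [← Finset.Ico_add_one_add_one_eq_Ioc, Finset.sum_Ico_eq_sum_range]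
    exact Finset.sum_congr (by congr 1; omega) fun j _ => by rw [show p + 1 + j = p + j + 1 by omega]
  rw [← hIoc]
  exact (sum_Ioc_inv_sq_le_sub hp (by omega)).trans (sub_le_self _ (by positivity))

lemma tsum_le_div_of_le_mul_inv_sq {f : ℕ → ℝ} {C : ℝ} {p : ℕ} (hp : p ≠ 0)
    (hf0 : ∀ j, 0 ≤ f j) (hf : ∀ j, f j ≤ C * (((p + j + 1 : ℕ) : ℝ) ^ 2)⁻¹) :
    ∑' j, f j ≤ C / p := by
  have hC : 0 ≤ C := nonneg_of_mul_nonneg_left ((hf0 0).trans (hf 0)) (by positivity)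
  refine Real.tsum_le_of_sum_range_le hf0 fun n => ?_
  calc ∑ j ∈ range n, f j ≤ ∑ j ∈ range n, C * (((p + j + 1 : ℕ) : ℝ) ^ 2)⁻¹ :=
        sum_le_sum fun j _ => hf j
    _ = C * ∑ j ∈ range n, (((p + j + 1 : ℕ) : ℝ) ^ 2)⁻¹ := (mul_sum _ _ _).symm
    _ ≤ C * (p : ℝ)⁻¹ := mul_le_mul_of_nonneg_left (sum_range_inv_sq_add_le p n hp) hC
    _ = C / p := (div_eq_mul_inv _ _).symm

lemma add_one_sq_div_le_four_mul {x : ℝ} (hx : 1 ≤ x) : (x + 1) ^ 2 / x ≤ 4 * x := by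
  rw [div_le_iff₀ (by linarith)]
  nlinarith

theorem stmt1_general (M : ℕ → ℝ) (hpos : ∀ p, 0 < M p)
    (hmono : ∃ lam > (0 : ℝ), ∀ p q : ℕ, 1 ≤ p → p ≤ q →
      (M p / M (p - 1)) / (p : ℝ) ^ lam ≤ (M q / M (q - 1)) / (q : ℝ) ^ lam) :
    ∃ s > (0 : ℝ), ∃ c0 ≥ (1 : ℝ), ∀ p : ℕ, 1 ≤ p →
      (∑' j : ℕ, (M (p + j + 1) / M (p + j)) ^ (-s)) ≤
        c0 * p * (M (p + 1) / M p) ^ (-s) := by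
  obtain ⟨lam, hlam, hm⟩ := hmono
  refine ⟨2 / lam, by positivity, 4, by norm_num, fun p hp => ?_⟩
  have hquot : ∀ q, 0 < M (q + 1) / M q := fun q => div_pos (hpos _) (hpos _)
  have hterm : ∀ j, (M (p + j + 1) / M (p + j)) ^ (-(2 / lam)) ≤
      (M (p + 1) / M p) ^ (-(2 / lam)) * ((p : ℝ) + 1) ^ 2 * (((p + j + 1 : ℕ) : ℝ) ^ 2)⁻¹ := by
    intro j
    have h := hm (p + 1) (p + j + 1) (by omega) (by omega)
    simp only [Nat.add_sub_cancel] at h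
    push_cast at h ⊢
    rw [mul_assoc, ← div_eq_mul_inv, ← div_pow, ← Real.rpow_two]
    exact rpow_neg_div_le_of_div_rpow_le (hquot p) (by positivity) (by positivity) hlam
      zero_le_two h
  calc ∑' j, (M (p + j + 1) / M (p + j)) ^ (-(2 / lam))
      ≤ (M (p + 1) / M p) ^ (-(2 / lam)) * ((p : ℝ) + 1) ^ 2 / p :=
        tsum_le_div_of_le_mul_inv_sq (by omega) (fun j => (Real.rpow_pos_of_pos (hquot _) _).le)
          hterm
    _ ≤ (M (p + 1) / M p) ^ (-(2 / lam)) * (4 * p) := by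
        rw [mul_div_assoc]
        exact mul_le_mul_of_nonneg_left (add_one_sq_div_le_four_mul (by exact_mod_cast hp))
          (Real.rpow_pos_of_pos (hquot p) _).le
    _ = 4 * p * (M (p + 1) / M p) ^ (-(2 / lam)) := mul_comm _ _

/-- If `M` is log-convex with `M 0 = M 1 = 1` and the quotients `m_p = M_p/M_{p-1}`
are such that `m_p / p^λ` is monotonically increasing for some `λ > 0`, then `M`
satisfies (M.5): for some `s > 0` and `c0 ≥ 1`,
`∑_{q=p+1}^∞ m_q^{-s} ≤ c0 p m_{p+1}^{-s}` for all `p ≥ 1`. -/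
theorem stmt1 (M : ℕ → ℝ) (hpos : ∀ p, 0 < M p) (h0 : M 0 = 1) (h1 : M 1 = 1)
    (hM1 : ∀ p : ℕ, 1 ≤ p → (M p) ^ 2 ≤ M (p - 1) * M (p + 1))
    (hmono : ∃ lam > (0 : ℝ), ∀ p q : ℕ, 1 ≤ p → p ≤ q →
      (M p / M (p - 1)) / (p : ℝ) ^ lam ≤ (M q / M (q - 1)) / (q : ℝ) ^ lam) :
    ∃ s > (0 : ℝ), ∃ c0 ≥ (1 : ℝ), ∀ p : ℕ, 1 ≤ p →
      (∑' j : ℕ, (M (p + j + 1) / M (p + j)) ^ (-s)) ≤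
        c0 * p * (M (p + 1) / M p) ^ (-s) :=
  stmt1_general M hpos hmono
end

section
/- Let (A_p) be a positive sequence with A_0 = 1 satisfying (M.2): A_{p} ≤ c_0 H^{p} min_{0≤q≤p} A_{p-q} A_q for some constants c_0, H ≥ 1, and let A(·) be its associated function. Then 2A(ρ) ≤ A(Hρ) + log c_0 for all ρ ≥ 0; equivalently e^{2A(ρ)} ≤ c_0 e^{A(Hρ)}. -/
/-- If a positive sequence `A` with `A 0 = 1` satisfies (M.2):
`A p ≤ c0 H^p A (p-q) A q` for all `q ≤ p` (with `c0, H ≥ 1`), then its associated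
function `A(ρ) = sup_p log⁺(ρ^p / A_p)` satisfies `2A(ρ) ≤ A(Hρ) + log c0`,
equivalently `e^{2A(ρ)} ≤ c0 e^{A(Hρ)}`, for all `ρ ≥ 0`. -/
theorem stmt3 (A : ℕ → ℝ) (hpos : ∀ p, 0 < A p) (hA0 : A 0 = 1)
    (c0 H : ℝ) (hc0 : 1 ≤ c0) (hH : 1 ≤ H)
    (hM2 : ∀ p q : ℕ, q ≤ p → A p ≤ c0 * H ^ p * (A (p - q) * A q))
    (hbdd : ∀ ρ : ℝ, 0 ≤ ρ →
      BddAbove (Set.range fun p : ℕ => max (Real.log (ρ ^ p / A p)) 0)) :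
    ∀ ρ : ℝ, 0 ≤ ρ →
      (2 * (⨆ p : ℕ, max (Real.log (ρ ^ p / A p)) 0) ≤
        (⨆ p : ℕ, max (Real.log ((H * ρ) ^ p / A p)) 0) + Real.log c0) ∧
      Real.exp (2 * (⨆ p : ℕ, max (Real.log (ρ ^ p / A p)) 0)) ≤
        c0 * Real.exp (⨆ p : ℕ, max (Real.log ((H * ρ) ^ p / A p)) 0) := by
  intro ρ hρ
  have hc0' : 0 < c0 := lt_of_lt_of_le one_pos hc0
  set f : ℕ → ℝ := fun p => max (Real.log (ρ ^ p / A p)) 0 with hf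
  set g : ℕ → ℝ := fun p => max (Real.log ((H * ρ) ^ p / A p)) 0 with hg
  have hHρ : 0 ≤ H * ρ := mul_nonneg (by linarith) hρ
  have hρH : ρ ≤ H * ρ := by nlinarith
  have hbf : BddAbove (Set.range f) := hbdd ρ hρ
  have hbg : BddAbove (Set.range g) := hbdd (H * ρ) hHρ
  set S : ℝ := ⨆ p, g p with hS
  set T : ℝ := ⨆ p, f p with hT
  have hg0 : g 0 = 0 := by simp [hg, hA0]
  have hS0 : 0 ≤ S := hg0 ▸ le_ciSup hbg 0
  have hlogc0 : 0 ≤ Real.log c0 := Real.log_nonneg hc0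
  -- each f r ≤ S
  have hfg : ∀ r, f r ≤ S := by
    intro r
    refine le_trans ?_ (le_ciSup hbg r)
    refine max_le ?_ (le_max_right _ _)
    rcases eq_or_lt_of_le (div_nonneg (pow_nonneg hρ r) (hpos r).le) with h0 | hpos'
    · rw [← h0, Real.log_zero]; exact le_max_right _ _
    · refine le_trans (Real.log_le_log hpos' ?_) (le_max_left _ _)
      exact div_le_div_of_nonneg_right (pow_le_pow_left₀ hρ hρH r) (hpos r).le
  -- key pairwise inequality
  have key : ∀ p q : ℕ, f p + f q ≤ S + Real.log c0 := by
    intro p q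
    rcases le_or_gt (Real.log (ρ ^ p / A p)) 0 with hp0 | hp0
    · have hfp : f p = 0 := max_eq_right hp0
      rw [hfp]; linarith [hfg q]
    rcases le_or_gt (Real.log (ρ ^ q / A q)) 0 with hq0 | hq0
    · have hfq : f q = 0 := max_eq_right hq0
      rw [hfq]; linarith [hfg p]
    -- both logs positive, so both quantities positive
    have hxp : 0 < ρ ^ p / A p := by
      rcases eq_or_lt_of_le (div_nonneg (pow_nonneg hρ p) (hpos p).le) with h0 | h
      · rw [← h0, Real.log_zero] at hp0; exact absurd hp0 (lt_irrefl 0)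
      · exact h
    have hxq : 0 < ρ ^ q / A q := by
      rcases eq_or_lt_of_le (div_nonneg (pow_nonneg hρ q) (hpos q).le) with h0 | h
      · rw [← h0, Real.log_zero] at hq0; exact absurd hq0 (lt_irrefl 0)
      · exact h
    have hfp : f p = Real.log (ρ ^ p / A p) := max_eq_left hp0.le
    have hfq : f q = Real.log (ρ ^ q / A q) := max_eq_left hq0.le
    have hρp : 0 < ρ ^ p := by
      have h := mul_pos hxp (hpos p)
      rwa [div_mul_cancel₀ _ (hpos p).ne'] at h
    have hρq : 0 < ρ ^ q := by
      have h := mul_pos hxq (hpos q)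
      rwa [div_mul_cancel₀ _ (hpos q).ne'] at h
    have hρpq : 0 < ρ ^ (p + q) := by rw [pow_add]; exact mul_pos hρp hρq
    -- M.2 at (p+q, q)
    have hM : A (p + q) ≤ c0 * H ^ (p + q) * (A p * A q) := by
      have := hM2 (p + q) q (Nat.le_add_left q p)
      simpa using this
    have hHρpq : 0 < (H * ρ) ^ (p + q) := lt_of_lt_of_le hρpq (pow_le_pow_left₀ hρ hρH _)
    have hmain : ρ ^ p / A p * (ρ ^ q / A q) ≤ c0 * ((H * ρ) ^ (p + q) / A (p + q)) := by
      have h1 : ρ ^ p / A p * (ρ ^ q / A q) = ρ ^ (p + q) / (A p * A q) := by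
        rw [pow_add]; field_simp
      have h2 : (H * ρ) ^ (p + q) = H ^ (p + q) * ρ ^ (p + q) := mul_pow H ρ (p + q)
      rw [h1, ← mul_div_assoc, div_le_div_iff₀ (mul_pos (hpos p) (hpos q)) (hpos (p + q)), h2]
      nlinarith [mul_le_mul_of_nonneg_left hM hρpq.le]
    have hlog : Real.log (ρ ^ p / A p) + Real.log (ρ ^ q / A q) ≤
        Real.log c0 + Real.log ((H * ρ) ^ (p + q) / A (p + q)) := by
      rw [← Real.log_mul (ne_of_gt hxp) (ne_of_gt hxq),
        ← Real.log_mul (ne_of_gt hc0') (ne_of_gt (div_pos hHρpq (hpos (p + q))))]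
      exact Real.log_le_log (mul_pos hxp hxq) hmain
    have hgpq : Real.log ((H * ρ) ^ (p + q) / A (p + q)) ≤ S := by
      refine le_trans (le_trans (le_max_left _ _) (le_refl (g (p + q)))) (le_ciSup hbg (p + q))
    rw [hfp, hfq]
    linarith
  -- conclude 2T ≤ S + log c0
  have step : ∀ p, f p + T ≤ S + Real.log c0 := by
    intro p
    have : T ≤ S + Real.log c0 - f p :=
      ciSup_le fun q => by linarith [key p q]
    linarith
  have hTT : 2 * T ≤ S + Real.log c0 := by
    have : T ≤ S + Real.log c0 - T :=
      ciSup_le fun p => by linarith [step p]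
    linarith
  refine ⟨hTT, ?_⟩
  calc Real.exp (2 * T) ≤ Real.exp (S + Real.log c0) := Real.exp_le_exp.mpr hTT
    _ = Real.exp S * c0 := by rw [Real.exp_add, Real.exp_log hc0']
    _ = c0 * Real.exp S := mul_comm _ _
end

section
/- Given positive monotonically increasing sequences tending to infinity: for every (k_p) ∈ 𝔕 there exists (k'_p) ∈ 𝔕 such that k'_p ≤ k_p for all p and ∏_{j=1}^{p+q} k'_j ≤ 2^{p+q} (∏_{j=1}^{p} k'_j)(∏_{j=1}^{q} k'_j) for all p, q ∈ ℤ_+. -/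
/-! The sequence `k'ₙ = (n + 1) · min_{m ≤ n} kₘ / (m + 1)` is the largest minorant of `k`
for which `k'ₙ / (n + 1)` is non-increasing (the shift by one spares a separate case `n = 0`).
This gives `(p + 1) k'_{p+q+1} ≤ (p + q + 1) k'_{p+1}`, and chaining these inequalities over `p`
bounds `∏_{j ≤ p+q} k'_j` by `C(p+q, p) ∏_{j ≤ p} k'_j ∏_{j ≤ q} k'_j`, where
`C(p+q, p) ≤ 2^(p+q)`. It still tends to infinity: for every `M`,
`k'ₙ ≥ min (k_M, (n + 1) min_{m ≤ M} kₘ / (m + 1))`. -/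

open Finset Filter

theorem prod_Icc_add_le_choose_mul {f : ℕ → ℝ} (hf : ∀ n, 0 ≤ f n)
    (hf_ratio : ∀ m n : ℕ, 0 < m → m ≤ n → (m : ℝ) * f n ≤ n * f m) (q : ℕ) :
    ∀ p : ℕ, ∏ j ∈ Icc 1 (p + q), f j ≤
      (p + q).choose p * ((∏ j ∈ Icc 1 p, f j) * ∏ j ∈ Icc 1 q, f j)
  | 0 => by simp
  | p + 1 => by
    set P := ∏ j ∈ Icc 1 p, f j
    set Q := ∏ j ∈ Icc 1 q, f j
    have hPQ : 0 ≤ P * Q := mul_nonneg (prod_nonneg fun j _ => hf j) (prod_nonneg fun j _ => hf j)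
    have hchoose : ((p + q + 1 : ℕ) : ℝ) * (p + q).choose p =
        (p + 1 + q).choose (p + 1) * (p + 1 : ℕ) := by
      rw [Nat.add_right_comm p 1 q]
      exact_mod_cast Nat.add_one_mul_choose_eq (p + q) p
    have hstep : ((p + q).choose p : ℝ) * f (p + q + 1) ≤
        (p + 1 + q).choose (p + 1) * f (p + 1) := by
      refine le_of_mul_le_mul_left ?_ (by positivity : (0 : ℝ) < (p + 1 : ℕ))
      calc ((p + 1 : ℕ) : ℝ) * ((p + q).choose p * f (p + q + 1))
          = (p + q).choose p * ((p + 1 : ℕ) * f (p + q + 1)) := by ring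
        _ ≤ (p + q).choose p * ((p + q + 1 : ℕ) * f (p + 1)) :=
          mul_le_mul_of_nonneg_left (hf_ratio (p + 1) (p + q + 1) p.succ_pos (by omega))
            (Nat.cast_nonneg _)
        _ = (p + 1 : ℕ) * ((p + 1 + q).choose (p + 1) * f (p + 1)) := by
          linear_combination f (p + 1) * hchoose
    calc ∏ j ∈ Icc 1 (p + 1 + q), f j
        = (∏ j ∈ Icc 1 (p + q), f j) * f (p + q + 1) := by
          rw [Nat.add_right_comm, prod_Icc_succ_top (by omega)]
      _ ≤ (p + q).choose p * (P * Q) * f (p + q + 1) := by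
          gcongr
          · exact hf _
          · exact prod_Icc_add_le_choose_mul hf hf_ratio q p
      _ = (p + q).choose p * f (p + q + 1) * (P * Q) := by ring
      _ ≤ (p + 1 + q).choose (p + 1) * f (p + 1) * (P * Q) := by gcongr
      _ = (p + 1 + q).choose (p + 1) * ((∏ j ∈ Icc 1 (p + 1), f j) * Q) := by
          rw [prod_Icc_succ_top (by omega)]; ring

noncomputable def ratioInf (k : ℕ → ℝ) (n : ℕ) : ℝ :=
  (Iic n).inf' nonempty_Iic fun m => k m / (m + 1)

noncomputable def minorant (k : ℕ → ℝ) (n : ℕ) : ℝ :=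
  (n + 1) * ratioInf k n

section

variable {k : ℕ → ℝ}

theorem ratioInf_le {m n : ℕ} (hmn : m ≤ n) : ratioInf k n ≤ k m / (m + 1) :=
  inf'_le _ (mem_Iic.2 hmn)

theorem ratioInf_antitone : Antitone (ratioInf k) := fun _ _ hmn =>
  inf'_mono _ (Iic_subset_Iic.2 hmn) nonempty_Iic

theorem ratioInf_pos (hpos : ∀ n, 0 < k n) (n : ℕ) : 0 < ratioInf k n :=
  (lt_inf'_iff _).2 fun m _ => by have := hpos m; positivity

theorem exists_ratioInf_eq (n : ℕ) : ∃ m ≤ n, ratioInf k n = k m / (m + 1) := by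
  obtain ⟨m, hm, h⟩ := exists_mem_eq_inf' (nonempty_Iic (a := n)) fun m => k m / (m + 1)
  exact ⟨m, mem_Iic.1 hm, h⟩

theorem minorant_pos (hpos : ∀ n, 0 < k n) (n : ℕ) : 0 < minorant k n :=
  mul_pos (by positivity) (ratioInf_pos hpos n)

theorem minorant_le (n : ℕ) : minorant k n ≤ k n :=
  (le_div_iff₀' (by positivity)).1 (ratioInf_le le_rfl)

theorem minorant_mono (hpos : ∀ n, 0 < k n) (hmono : Monotone k) : Monotone (minorant k) := by
  refine monotone_nat_of_le_succ fun n => ?_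
  obtain ⟨m, hmn, hm⟩ := exists_ratioInf_eq (k := k) (n + 1)
  rcases Nat.le_succ_iff.1 hmn with hmn | rfl
  · calc minorant k n ≤ (n + 1 + 1) * ratioInf k n := by
          rw [minorant]; gcongr
          · exact (ratioInf_pos hpos n).le
          · linarith
      _ ≤ minorant k (n + 1) := by
          rw [minorant, hm]; push_cast; gcongr; exact ratioInf_le hmn
  · calc minorant k n ≤ k n := minorant_le n
      _ ≤ k (n + 1) := hmono n.le_succ
      _ = minorant k (n + 1) := by rw [minorant, hm]; field_simp

theorem cast_mul_minorant_le (hpos : ∀ n, 0 < k n) {m n : ℕ} (hmn : m ≤ n) :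
    (m : ℝ) * minorant k n ≤ n * minorant k m := by
  have hc := (ratioInf_pos hpos m).le
  have hmn' : (m : ℝ) ≤ n := by exact_mod_cast hmn
  calc (m : ℝ) * minorant k n = m * (n + 1) * ratioInf k n := by rw [minorant]; ring
    _ ≤ m * (n + 1) * ratioInf k m := by gcongr; exact ratioInf_antitone hmn
    _ ≤ n * (m + 1) * ratioInf k m := mul_le_mul_of_nonneg_right (by linarith) hc
    _ = n * minorant k m := by rw [minorant]; ring

theorem min_le_minorant (hpos : ∀ n, 0 < k n) (hmono : Monotone k) (M n : ℕ) :
    min (k M) ((n + 1) * ratioInf k M) ≤ minorant k n := by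
  obtain ⟨m, hmn, hm⟩ := exists_ratioInf_eq (k := k) n
  rw [minorant, hm]
  rcases le_total M m with hMm | hmM
  · refine min_le_of_left_le ?_
    calc k M ≤ k m := hmono hMm
      _ = (m + 1) * (k m / (m + 1)) := by field_simp
      _ ≤ (n + 1) * (k m / (m + 1)) := by
          gcongr
          have := hpos m
          positivity
  · exact min_le_of_right_le (by gcongr; exact ratioInf_le hmM)

theorem tendsto_minorant (hpos : ∀ n, 0 < k n) (hmono : Monotone k)
    (htends : Tendsto k atTop atTop) : Tendsto (minorant k) atTop atTop := by
  refine tendsto_atTop.2 fun T => ?_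
  obtain ⟨M, hM⟩ := eventually_atTop.1 (tendsto_atTop.1 htends T)
  have hlin : Tendsto (fun n : ℕ => ((n : ℝ) + 1) * ratioInf k M) atTop atTop :=
    (tendsto_atTop_add_const_right _ 1 tendsto_natCast_atTop_atTop).atTop_mul_const
      (ratioInf_pos hpos M)
  filter_upwards [tendsto_atTop.1 hlin T] with n hn
  exact (le_min (hM M le_rfl) hn).trans (min_le_minorant hpos hmono M n)

end

/-- For every positive monotonically increasing sequence `k` tending to infinity there is a
positive monotonically increasing sequence `k'` tending to infinity with `k' ≤ k` and
`∏_{j=1}^{p+q} k'_j ≤ 2^{p+q} (∏_{j=1}^p k'_j)(∏_{j=1}^q k'_j)` for all `p, q ≥ 1`. -/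
theorem stmt4 (k : ℕ → ℝ) (hpos : ∀ p, 0 < k p) (hmono : Monotone k)
    (htends : Filter.Tendsto k Filter.atTop Filter.atTop) :
    ∃ k' : ℕ → ℝ, (∀ p, 0 < k' p) ∧ Monotone k' ∧
      Filter.Tendsto k' Filter.atTop Filter.atTop ∧ (∀ p, k' p ≤ k p) ∧
      ∀ p q : ℕ, 1 ≤ p → 1 ≤ q →
        (∏ j ∈ Finset.Icc 1 (p + q), k' j) ≤
          (2 : ℝ) ^ (p + q) *
            ((∏ j ∈ Finset.Icc 1 p, k' j) * (∏ j ∈ Finset.Icc 1 q, k' j)) := by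
  refine ⟨minorant k, minorant_pos hpos, minorant_mono hpos hmono,
    tendsto_minorant hpos hmono htends, minorant_le, fun p q _ _ => ?_⟩
  have hnonneg : ∀ n, 0 ≤ minorant k n := fun n => (minorant_pos hpos n).le
  calc ∏ j ∈ Icc 1 (p + q), minorant k j
      ≤ (p + q).choose p * ((∏ j ∈ Icc 1 p, minorant k j) * ∏ j ∈ Icc 1 q, minorant k j) :=
        prod_Icc_add_le_choose_mul hnonneg (fun m n _ hmn => cast_mul_minorant_le hpos hmn) q p
    _ ≤ 2 ^ (p + q) * ((∏ j ∈ Icc 1 p, minorant k j) * ∏ j ∈ Icc 1 q, minorant k j) := by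
        gcongr
        · exact mul_nonneg (prod_nonneg fun j _ => hnonneg j) (prod_nonneg fun j _ => hnonneg j)
        · exact_mod_cast Nat.choose_le_two_pow (p + q) p
end

section
/- Let (M_p) be a positive sequence with M_0 = 1, and suppose a family of reals (a_α)_{α∈ℕ^d} satisfies: for every sequence (r_p) of positive reals increasing to infinity, sup_α |a_α| / (M_α ∏_{j=1}^{|α|} r_j) < ∞ (where M_α = M_{|α|}). Then there exists h > 0 such that sup_α h^{|α|} |a_α| / M_α < ∞. -/
/-- The scalar core of Komatsu's Lemma 3.4: if a family `(a_α)_{α ∈ ℕ^d}` satisfies, for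
every positive monotonically increasing sequence `(r_p)` tending to infinity,
`sup_α |a_α| / (M_{|α|} ∏_{j=1}^{|α|} r_j) < ∞`, then there is a single `h > 0` with
`sup_α h^{|α|} |a_α| / M_{|α|} < ∞`. -/
theorem stmt18 {d : ℕ} (M : ℕ → ℝ) (hpos : ∀ p, 0 < M p) (h0 : M 0 = 1)
    (a : (Fin d → ℕ) → ℝ)
    (hbd : ∀ r : ℕ → ℝ, (∀ p, 0 < r p) → Monotone r →
      Filter.Tendsto r Filter.atTop Filter.atTop →
      ∃ C : ℝ, ∀ α : Fin d → ℕ,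
        |a α| ≤ C * M (∑ j, α j) * ∏ j ∈ Finset.Icc 1 (∑ j, α j), r j) :
    ∃ h > (0 : ℝ), ∃ C : ℝ, ∀ α : Fin d → ℕ,
      h ^ (∑ j, α j) * |a α| ≤ C * M (∑ j, α j) := by
  by_contra hcon
  push_neg at hcon
  -- hcon : ∀ h, 0 < h → ∀ C, ∃ α, C * M (∑ j, α j) < h ^ (∑ j, α j) * |a α|
  have key : ∀ k N : ℕ, ∃ α : Fin d → ℕ, N < ∑ j, α j ∧
      ((k : ℝ) + 1) ^ ((∑ j, α j) + 1) * M (∑ j, α j) < |a α| := by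
    intro k N
    classical
    set F : Finset (Fin d → ℕ) :=
      (Fintype.piFinset fun _ : Fin d => Finset.range (N + 1)).filter
        (fun α => ∑ j, α j ≤ N) with hF
    set C : ℝ := ((k : ℝ) + 1) + ∑ α ∈ F, |a α| / M (∑ j, α j) with hCdef
    have hsum_nonneg : 0 ≤ ∑ α ∈ F, |a α| / M (∑ j, α j) :=
      Finset.sum_nonneg fun α _ => div_nonneg (abs_nonneg _) (hpos _).le
    have hk1 : (0 : ℝ) < (k : ℝ) + 1 := by positivity
    have hCk : ((k : ℝ) + 1) ≤ C := le_add_of_nonneg_right hsum_nonneg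
    have hC0 : 0 ≤ C := le_trans hk1.le hCk
    obtain ⟨α, hα⟩ := hcon ((k : ℝ) + 1)⁻¹ (by positivity) C
    set s := ∑ j, α j with hs
    have hpows : (0 : ℝ) < ((k : ℝ) + 1) ^ s := by positivity
    have habs : C * ((k : ℝ) + 1) ^ s * M s < |a α| := by
      rw [inv_pow] at hα
      have h2 : ((k : ℝ) + 1) ^ s * (C * M s) <
          ((k : ℝ) + 1) ^ s * (((k : ℝ) + 1) ^ s)⁻¹ * |a α| := by
        rw [mul_assoc]
        exact mul_lt_mul_of_pos_left hα hpows
      rw [mul_inv_cancel₀ (ne_of_gt hpows), one_mul] at h2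
      nlinarith [h2]
    have hNlt : N < s := by
      by_contra hle
      push_neg at hle
      have hmem : α ∈ F := by
        simp only [hF, Finset.mem_filter, Fintype.mem_piFinset, Finset.mem_range]
        refine ⟨fun j => ?_, hle⟩
        have : α j ≤ s := Finset.single_le_sum (f := fun j => α j)
          (fun _ _ => Nat.zero_le _) (Finset.mem_univ j)
        omega
      have hle2 : |a α| / M s ≤ ∑ β ∈ F, |a β| / M (∑ j, β j) :=
        Finset.single_le_sum (f := fun β => |a β| / M (∑ j, β j))
          (fun β _ => div_nonneg (abs_nonneg _) (hpos _).le) hmem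
      have hle3 : |a α| ≤ C * M s := by
        rw [div_le_iff₀ (hpos s)] at hle2
        calc |a α| ≤ (∑ β ∈ F, |a β| / M (∑ j, β j)) * M s := hle2
          _ ≤ C * M s := mul_le_mul_of_nonneg_right (by linarith) (hpos s).le
      have hone : (1 : ℝ) ≤ ((k : ℝ) + 1) ^ s := one_le_pow₀ (by linarith)
      nlinarith [hpos s, mul_nonneg hC0 (hpos s).le]
    refine ⟨α, hNlt, ?_⟩
    have hstep : ((k : ℝ) + 1) ^ (s + 1) * M s ≤ C * ((k : ℝ) + 1) ^ s * M s := by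
      rw [pow_succ]
      have := mul_le_mul_of_nonneg_right hCk hpows.le
      nlinarith [hpos s]
    linarith
  choose g hg1 hg2 using key
  set B : ℕ → (Fin d → ℕ) :=
    fun k => Nat.rec (g 0 0) (fun k Bk => g (k + 1) (∑ j, Bk j)) k with hB
  set p : ℕ → ℕ := fun k => ∑ j, B k j with hp
  have hBsucc : ∀ k, B (k + 1) = g (k + 1) (p k) := fun k => rfl
  have hpmono : StrictMono p := by
    apply strictMono_nat_of_lt_succ
    intro k
    have := hg1 (k + 1) (p k)
    rw [hp]
    simpa [hBsucc k] using this
  have hA : ∀ k : ℕ, ((k : ℝ) + 1) ^ (p k + 1) * M (p k) < |a (B k)| := by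
    intro k
    cases k with
    | zero => exact hg2 0 0
    | succ k =>
      have := hg2 (k + 1) (p k)
      simpa [hp, hBsucc k] using this
  classical
  set r : ℕ → ℝ :=
    fun j => (((Finset.range j).filter fun i => p i < j).card : ℝ) + 1 with hr
  have hrpos : ∀ j, 0 < r j := by intro j; rw [hr]; positivity
  have hrmono : Monotone r := by
    intro j j' hjj
    rw [hr]
    simp only
    have : ((Finset.range j).filter fun i => p i < j) ⊆
        ((Finset.range j').filter fun i => p i < j') := by
      intro i hi
      simp only [Finset.mem_filter, Finset.mem_range] at hi ⊢
      omega
    have h4 := Finset.card_le_card this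
    have h5 : ((((Finset.range j).filter fun i => p i < j).card : ℕ) : ℝ) ≤
        ((((Finset.range j').filter fun i => p i < j').card : ℕ) : ℝ) := by
      exact_mod_cast h4
    linarith
  have hrtend : Filter.Tendsto r Filter.atTop Filter.atTop := by
    apply Monotone.tendsto_atTop_atTop hrmono
    intro b
    set K := ⌈b⌉₊ with hK
    refine ⟨p K + 1, ?_⟩
    have hsub : Finset.range (K + 1) ⊆
        ((Finset.range (p K + 1)).filter fun i => p i < p K + 1) := by
      intro i hi
      simp only [Finset.mem_range] at hi
      have hi' : i ≤ K := by omega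
      have h1 : p i ≤ p K := hpmono.monotone hi'
      have h2 : i ≤ p K := le_trans hi' (hpmono.le_apply)
      simp only [Finset.mem_filter, Finset.mem_range]
      omega
    have hcard := Finset.card_le_card hsub
    rw [Finset.card_range] at hcard
    have hb : b ≤ (K : ℝ) := Nat.le_ceil b
    rw [hr]
    simp only
    push_cast
    have : (K : ℝ) + 1 ≤
        ((((Finset.range (p K + 1)).filter fun i => p i < p K + 1).card : ℕ) : ℝ) := by
      exact_mod_cast hcard
    linarith
  have hprod : ∀ k, ∏ j ∈ Finset.Icc 1 (p k), r j ≤ ((k : ℝ) + 1) ^ (p k) := by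
    intro k
    have hle : ∀ j ∈ Finset.Icc 1 (p k), r j ≤ (k : ℝ) + 1 := by
      intro j hj
      simp only [Finset.mem_Icc] at hj
      have hsub : ((Finset.range j).filter fun i => p i < j) ⊆ Finset.range k := by
        intro i hi
        simp only [Finset.mem_filter, Finset.mem_range] at hi ⊢
        have : p i < p k := lt_of_lt_of_le hi.2 hj.2
        exact hpmono.lt_iff_lt.mp this
      have := Finset.card_le_card hsub
      rw [Finset.card_range] at this
      rw [hr]
      simp only
      push_cast
      have : (((Finset.range j).filter fun i => p i < j).card : ℝ) ≤ (k : ℝ) := by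
        exact_mod_cast this
      linarith
    calc ∏ j ∈ Finset.Icc 1 (p k), r j ≤ ∏ j ∈ Finset.Icc 1 (p k), ((k : ℝ) + 1) :=
          Finset.prod_le_prod (fun j _ => (hrpos j).le) hle
      _ = ((k : ℝ) + 1) ^ (p k) := by
          rw [Finset.prod_const, Nat.card_Icc]
          norm_num
  obtain ⟨C, hC⟩ := hbd r hrpos hrmono hrtend
  set k := ⌈max C 0⌉₊ with hk
  have hCk : max C 0 ≤ (k : ℝ) := Nat.le_ceil _
  have hprod_nonneg : 0 ≤ ∏ j ∈ Finset.Icc 1 (p k), r j :=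
    Finset.prod_nonneg fun j _ => (hrpos j).le
  have h1 := hA k
  have h2 : |a (B k)| ≤ C * M (p k) * ∏ j ∈ Finset.Icc 1 (p k), r j := hC (B k)
  have h3 : |a (B k)| ≤ max C 0 * M (p k) * ((k : ℝ) + 1) ^ (p k) := by
    calc |a (B k)| ≤ C * M (p k) * ∏ j ∈ Finset.Icc 1 (p k), r j := h2
      _ ≤ max C 0 * M (p k) * ∏ j ∈ Finset.Icc 1 (p k), r j :=
          mul_le_mul_of_nonneg_right
            (mul_le_mul_of_nonneg_right (le_max_left _ _) (hpos _).le) hprod_nonneg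
      _ ≤ max C 0 * M (p k) * ((k : ℝ) + 1) ^ (p k) :=
          mul_le_mul_of_nonneg_left (hprod k)
            (mul_nonneg (le_max_right C 0) (hpos _).le)
  have hpow : (0 : ℝ) < ((k : ℝ) + 1) ^ (p k) := by positivity
  rw [pow_succ] at h1
  nlinarith [hpos (p k), mul_le_mul_of_nonneg_right hCk (mul_nonneg hpow.le (hpos (p k)).le)]
end
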